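/- In a projective rectangle, the special point D belongs to every full projective subplane, and for every special line s and full subplane π, the intersection s ∩ π is a line of π. -/

import Mathlib

/-!
Let `s` be a special line and `π` a full subplane. A vertex `v ≠ D` of a quadrangle of `π`
lies on three lines of `π`, at most one of them through `D`. The two ordinary ones lie wholly
in `π`, so by (A5) they meet `s` in points of `π`, and these points are distinct unless
`v ∈ s`. At least two vertices differ from `D`, hence `s` carries two points of `π` and is a
line of `π`. Two distinct special lines of `π` then meet in a point of `π`, which must be `D`.
-/

/-- A projective rectangle: an incidence structure satisfying axioms (A1)-(A6). -/
structure ProjRect (Point Line : Type) where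
  Incid : Point → Line → Prop
  /-- (A4) the special point. -/
  D : Point
  /-- (A1) every two distinct points lie on exactly one line. -/
  A1 : ∀ p q : Point, p ≠ q → ∃! l : Line, Incid p l ∧ Incid q l
  /-- (A2) there exist four points with no three collinear. -/
  A2 : ∃ a b c d : Point, a ≠ b ∧ a ≠ c ∧ a ≠ d ∧ b ≠ c ∧ b ≠ d ∧ c ≠ d ∧
    (∀ l : Line, ¬(Incid a l ∧ Incid b l ∧ Incid c l)) ∧
    (∀ l : Line, ¬(Incid a l ∧ Incid b l ∧ Incid d l)) ∧
    (∀ l : Line, ¬(Incid a l ∧ Incid c l ∧ Incid d l)) ∧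
    (∀ l : Line, ¬(Incid b l ∧ Incid c l ∧ Incid d l))
  /-- (A3) every line has at least three points. -/
  A3 : ∀ l : Line, ∃ p q r : Point, p ≠ q ∧ p ≠ r ∧ q ≠ r ∧
    Incid p l ∧ Incid q l ∧ Incid r l
  /-- (A5) each special line intersects every other line in exactly one point. -/
  A5 : ∀ s l : Line, Incid D s → l ≠ s → ∃! p : Point, Incid p s ∧ Incid p l
  /-- (A6) restricted Pasch axiom. -/
  A6 : ∀ l1 l2 l3 l4 : Line, ∀ p p13 p14 p23 p24 : Point,
    ¬Incid D l1 → ¬Incid D l2 → l1 ≠ l2 → Incid p l1 → Incid p l2 → l3 ≠ l4 →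
    Incid p13 l1 → Incid p13 l3 → Incid p14 l1 → Incid p14 l4 →
    Incid p23 l2 → Incid p23 l3 → Incid p24 l2 → Incid p24 l4 →
    p13 ≠ p14 → p13 ≠ p23 → p13 ≠ p24 → p14 ≠ p23 → p14 ≠ p24 → p23 ≠ p24 →
    ∃ q : Point, Incid q l3 ∧ Incid q l4

/-- A subplane of a projective rectangle: sets of points and lines which, with the
induced incidence, form a projective plane. -/
def ProjRect.IsSubplane {Point Line : Type} (R : ProjRect Point Line)
    (P' : Set Point) (L' : Set Line) : Prop :=
  (∀ p q, p ∈ P' → q ∈ P' → p ≠ q → ∃! l, l ∈ L' ∧ R.Incid p l ∧ R.Incid q l) ∧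
  (∀ l m, l ∈ L' → m ∈ L' → l ≠ m → ∃ x, x ∈ P' ∧ R.Incid x l ∧ R.Incid x m) ∧
  (∃ a b c d, a ∈ P' ∧ b ∈ P' ∧ c ∈ P' ∧ d ∈ P' ∧
    a ≠ b ∧ a ≠ c ∧ a ≠ d ∧ b ≠ c ∧ b ≠ d ∧ c ≠ d ∧
    (∀ l ∈ L', ¬(R.Incid a l ∧ R.Incid b l ∧ R.Incid c l)) ∧
    (∀ l ∈ L', ¬(R.Incid a l ∧ R.Incid b l ∧ R.Incid d l)) ∧
    (∀ l ∈ L', ¬(R.Incid a l ∧ R.Incid c l ∧ R.Incid d l)) ∧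
    (∀ l ∈ L', ¬(R.Incid b l ∧ R.Incid c l ∧ R.Incid d l)))

/-- A subplane is full if it contains every point of each ordinary line it contains. -/
def ProjRect.IsFull {Point Line : Type} (R : ProjRect Point Line)
    (P' : Set Point) (L' : Set Line) : Prop :=
  ∀ l ∈ L', ¬R.Incid R.D l → ∀ p, R.Incid p l → p ∈ P'

namespace ProjRect

variable {Point Line : Type} (R : ProjRect Point Line)

theorem line_eq_of_incid {x y : Point} {l m : Line} (hxy : x ≠ y)
    (hxl : R.Incid x l) (hyl : R.Incid y l) (hxm : R.Incid x m) (hym : R.Incid y m) :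
    l = m :=
  (R.A1 x y hxy).unique ⟨hxl, hyl⟩ ⟨hxm, hym⟩

theorem exists_not_incid (l : Line) : ∃ p, ¬R.Incid p l := by
  obtain ⟨a, b, c, -, -, -, -, -, -, -, habc, -⟩ := R.A2
  by_contra! h
  exact habc l ⟨h a, h b, h c⟩

theorem exists_special_line : ∃ s, R.Incid R.D s := by
  obtain ⟨a, b, -, -, hab, -⟩ := R.A2
  obtain ⟨p, hp⟩ : ∃ p, p ≠ R.D := by
    by_contra! h
    exact hab ((h a).trans (h b).symm)
  obtain ⟨s, ⟨-, hs⟩, -⟩ := R.A1 p R.D hp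
  exact ⟨s, hs⟩

theorem exists_special_line_ne {s : Line} (hs : R.Incid R.D s) :
    ∃ t, R.Incid R.D t ∧ t ≠ s := by
  obtain ⟨q, hq⟩ := R.exists_not_incid s
  obtain ⟨t, ⟨hqt, hDt⟩, -⟩ := R.A1 q R.D fun h => hq (h ▸ hs)
  exact ⟨t, hDt, fun h => hq (h ▸ hqt)⟩

def HasTwoPointsOn (P' : Set Point) (l : Line) : Prop :=
  ∃ x y, x ∈ P' ∧ y ∈ P' ∧ x ≠ y ∧ R.Incid x l ∧ R.Incid y l

variable {R} {P' : Set Point} {L' : Set Line} {s : Line}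

theorem IsSubplane.mem_of_hasTwoPointsOn (hsub : R.IsSubplane P' L') {l : Line}
    (h : R.HasTwoPointsOn P' l) : l ∈ L' := by
  obtain ⟨x, y, hx, hy, hxy, hxl, hyl⟩ := h
  obtain ⟨m, ⟨hm, hxm, hym⟩, -⟩ := hsub.1 x y hx hy hxy
  exact R.line_eq_of_incid hxy hxm hym hxl hyl ▸ hm

theorem IsFull.incid_or_hasTwoPointsOn (hfull : R.IsFull P' L') (hs : R.Incid R.D s)
    {p : Point} {l₁ l₂ : Line} (hl₁ : l₁ ∈ L') (hl₂ : l₂ ∈ L') (hne : l₁ ≠ l₂)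
    (hpl₁ : R.Incid p l₁) (hpl₂ : R.Incid p l₂)
    (hD₁ : ¬R.Incid R.D l₁) (hD₂ : ¬R.Incid R.D l₂) :
    R.Incid p s ∨ R.HasTwoPointsOn P' s := by
  obtain ⟨x, ⟨hxs, hxl⟩, -⟩ := R.A5 s l₁ hs fun h => hD₁ (h ▸ hs)
  obtain ⟨y, ⟨hys, hyl⟩, -⟩ := R.A5 s l₂ hs fun h => hD₂ (h ▸ hs)
  by_cases hxy : x = y
  · subst hxy
    by_cases hxp : x = p
    · exact .inl (hxp ▸ hxs)
    · exact absurd (R.line_eq_of_incid hxp hxl hpl₁ hyl hpl₂) hne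
  · exact .inr ⟨x, y, hfull l₁ hl₁ hD₁ x hxl, hfull l₂ hl₂ hD₂ y hyl, hxy, hxs, hys⟩

theorem IsFull.incid_or_hasTwoPointsOn_of_three_lines (hfull : R.IsFull P' L')
    (hs : R.Incid R.D s) {v : Point} (hvD : v ≠ R.D) {l₁ l₂ l₃ : Line}
    (hl₁ : l₁ ∈ L') (hl₂ : l₂ ∈ L') (hl₃ : l₃ ∈ L')
    (hvl₁ : R.Incid v l₁) (hvl₂ : R.Incid v l₂) (hvl₃ : R.Incid v l₃)
    (h₁₂ : l₁ ≠ l₂) (h₁₃ : l₁ ≠ l₃) (h₂₃ : l₂ ≠ l₃) :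
    R.Incid v s ∨ R.HasTwoPointsOn P' s := by
  by_cases hD₁ : R.Incid R.D l₁
  · have hD₂ : ¬R.Incid R.D l₂ := fun hD₂ => h₁₂ (R.line_eq_of_incid hvD hvl₁ hD₁ hvl₂ hD₂)
    have hD₃ : ¬R.Incid R.D l₃ := fun hD₃ => h₁₃ (R.line_eq_of_incid hvD hvl₁ hD₁ hvl₃ hD₃)
    exact hfull.incid_or_hasTwoPointsOn hs hl₂ hl₃ h₂₃ hvl₂ hvl₃ hD₂ hD₃
  by_cases hD₂ : R.Incid R.D l₂
  · have hD₃ : ¬R.Incid R.D l₃ := fun hD₃ => h₂₃ (R.line_eq_of_incid hvD hvl₂ hD₂ hvl₃ hD₃)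
    exact hfull.incid_or_hasTwoPointsOn hs hl₁ hl₃ h₁₃ hvl₁ hvl₃ hD₁ hD₃
  exact hfull.incid_or_hasTwoPointsOn hs hl₁ hl₂ h₁₂ hvl₁ hvl₂ hD₁ hD₂

theorem IsSubplane.incid_or_hasTwoPointsOn_of_noncollinear (hsub : R.IsSubplane P' L')
    (hfull : R.IsFull P' L') (hs : R.Incid R.D s) {v x y z : Point}
    (hv : v ∈ P') (hx : x ∈ P') (hy : y ∈ P') (hz : z ∈ P') (hvD : v ≠ R.D)
    (hvx : v ≠ x) (hvy : v ≠ y) (hvz : v ≠ z)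
    (hvxy : ∀ l ∈ L', ¬(R.Incid v l ∧ R.Incid x l ∧ R.Incid y l))
    (hvxz : ∀ l ∈ L', ¬(R.Incid v l ∧ R.Incid x l ∧ R.Incid z l))
    (hvyz : ∀ l ∈ L', ¬(R.Incid v l ∧ R.Incid y l ∧ R.Incid z l)) :
    R.Incid v s ∨ R.HasTwoPointsOn P' s := by
  obtain ⟨lx, ⟨hlx, hvlx, hxlx⟩, -⟩ := hsub.1 v x hv hx hvx
  obtain ⟨ly, ⟨hly, hvly, hyly⟩, -⟩ := hsub.1 v y hv hy hvy
  obtain ⟨lz, ⟨hlz, hvlz, hzlz⟩, -⟩ := hsub.1 v z hv hz hvz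
  refine hfull.incid_or_hasTwoPointsOn_of_three_lines hs hvD hlx hly hlz hvlx hvly hvlz
    ?_ ?_ ?_
  · exact fun h => hvxy ly hly ⟨hvly, h ▸ hxlx, hyly⟩
  · exact fun h => hvxz lz hlz ⟨hvlz, h ▸ hxlx, hzlz⟩
  · exact fun h => hvyz lz hlz ⟨hvlz, h ▸ hyly, hzlz⟩

theorem IsSubplane.hasTwoPointsOn_of_special (hsub : R.IsSubplane P' L')
    (hfull : R.IsFull P' L') (hs : R.Incid R.D s) : R.HasTwoPointsOn P' s := by
  obtain ⟨a, b, c, d, ha, hb, hc, hd, hab, hac, had, hbc, hbd, hcd,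
    habc, habd, hacd, hbcd⟩ := hsub.2.2
  by_contra h
  have has : a ≠ R.D → R.Incid a s := fun haD =>
    (hsub.incid_or_hasTwoPointsOn_of_noncollinear hfull hs ha hb hc hd haD hab hac had
      habc habd hacd).resolve_right h
  have hbs : b ≠ R.D → R.Incid b s := fun hbD =>
    (hsub.incid_or_hasTwoPointsOn_of_noncollinear hfull hs hb ha hc hd hbD hab.symm hbc hbd
      (fun l hl ⟨hb, ha, hc⟩ => habc l hl ⟨ha, hb, hc⟩)
      (fun l hl ⟨hb, ha, hd⟩ => habd l hl ⟨ha, hb, hd⟩) hbcd).resolve_right h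
  have hcs : c ≠ R.D → R.Incid c s := fun hcD =>
    (hsub.incid_or_hasTwoPointsOn_of_noncollinear hfull hs hc ha hb hd hcD hac.symm hbc.symm hcd
      (fun l hl ⟨hc, ha, hb⟩ => habc l hl ⟨ha, hb, hc⟩)
      (fun l hl ⟨hc, ha, hd⟩ => hacd l hl ⟨ha, hc, hd⟩)
      (fun l hl ⟨hc, hb, hd⟩ => hbcd l hl ⟨hb, hc, hd⟩)).resolve_right h
  rcases eq_or_ne a R.D with haD | haD
  · exact h ⟨b, c, hb, hc, hbc, hbs (haD ▸ hab.symm), hcs (haD ▸ hac.symm)⟩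
  rcases eq_or_ne b R.D with hbD | hbD
  · exact h ⟨a, c, ha, hc, hac, has haD, hcs (hbD ▸ hbc.symm)⟩
  exact h ⟨a, b, ha, hb, hab, has haD, hbs hbD⟩

theorem IsSubplane.special_mem (hsub : R.IsSubplane P' L') (hfull : R.IsFull P' L')
    (hs : R.Incid R.D s) : s ∈ L' :=
  hsub.mem_of_hasTwoPointsOn (hsub.hasTwoPointsOn_of_special hfull hs)

theorem IsSubplane.D_mem (hsub : R.IsSubplane P' L') (hfull : R.IsFull P' L') : R.D ∈ P' := by
  obtain ⟨s, hs⟩ := R.exists_special_line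
  obtain ⟨t, ht, hts⟩ := R.exists_special_line_ne hs
  obtain ⟨x, hx, hxt, hxs⟩ :=
    hsub.2.1 t s (hsub.special_mem hfull ht) (hsub.special_mem hfull hs) hts
  by_contra hD
  exact hts (R.line_eq_of_incid (ne_of_mem_of_not_mem hx hD) hxt ht hxs hs)

end ProjRect

/-- The special point D lies in every full subplane, and the intersection of every
special line with a full subplane is a line of the subplane. -/
theorem stmt_8 {Point Line : Type} (R : ProjRect Point Line)
    (P' : Set Point) (L' : Set Line)
    (hsub : R.IsSubplane P' L') (hfull : R.IsFull P' L') :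
    R.D ∈ P' ∧ ∀ s : Line, R.Incid R.D s → s ∈ L' :=
  ⟨hsub.D_mem hfull, fun _ hs => hsub.special_mem hfull hs⟩
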